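/- arXiv:2402.14125 — 4 statements merged into one kernel-verified Lean document; each statement's English description precedes it below -/
import Mathlib

section
/- Let (k,l) belong to the class PC and let μ > 0. Let s_μ : (0,∞) → ℝ be a nonnegative, nonincreasing, measurable, locally integrable function satisfying the Volterra equation s_μ(t) + μ·(l ∗ s_μ)(t) = 1 for all t > 0. Then for almost every t > 0 one has k(t)/(k(t)+μ) ≤ s_μ(t) ≤ 1/(1 + μ·∫_0^t l(τ) dτ); when k(t) > 0 the lower bound can equivalently be written 1/(1 + μ·k(t)^{-1}) ≤ s_μ(t). -/
open MeasureTheory Set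

/-- Laplace convolution on `(0, ∞)`: `(f ∗ g)(t) = ∫_0^t f(t−τ) g(τ) dτ`. -/
noncomputable def lconv (f g : ℝ → ℝ) (t : ℝ) : ℝ := ∫ τ in (0:ℝ)..t, f (t - τ) * g τ

/-- The pair `(k, l)` belongs to the class `PC`. -/
structure SoninePC (k l : ℝ → ℝ) : Prop where
  k_nonneg : ∀ t ∈ Ioi (0:ℝ), 0 ≤ k t
  k_anti : AntitoneOn k (Ioi 0)
  k_locInt : LocallyIntegrableOn k (Ioi 0)
  l_nonneg : ∀ t ∈ Ioi (0:ℝ), 0 ≤ l t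
  l_locInt : LocallyIntegrableOn l (Ioi 0)
  sonine : ∀ t ∈ Ioi (0:ℝ), lconv k l t = 1

/-!
Extend functions on `(0, ∞)` by zero to `ℝ` and pass to `ℝ≥0∞`: `lconv` becomes Mathlib's
`lconvolution`, which is associative and needs no integrability. There the Volterra equation
reads `1 - s = μ (l ∗ s)`, and convolving with `k` gives `k ∗ (1 - s) = μ (1 ∗ s)` since
`k ∗ l = 1`. For `0 < a < b`, comparing this identity at `a` and at `b` (a rearrangement
inequality, as `k` and `s` are nonincreasing) gives `(1 - s(a)) ∫_a^b k ≤ μ ∫_a^b s`, hence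
`(1 - s(a)) k(b) ≤ μ s(a)`; letting `b ↓ a` at the points of right continuity of `k`, which are
all but countably many, yields the lower bound. The upper bound is
`1 - s(t) = μ (l ∗ s)(t) ≥ μ s(t) ∫_0^t l`. The finiteness of `∫_0^t k` and `∫_0^t l`, needed to
cancel terms and to return to real integrals, holds because if `f ∗ g = 1` and `∫_0^u f = ∞`,
then `1 ∗ 1 = g ∗ (1 ∗ f)` would be infinite.
-/

open scoped ENNReal

section lconvolution

variable {G : Type*} [MeasurableSpace G] [Add G] [Neg G] {μ : Measure G}

theorem lconvolution_mono_right {f g g' : G → ℝ≥0∞} (h : g ≤ g') : f ⋆ₗ[μ] g ≤ f ⋆ₗ[μ] g' :=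
  fun _ => lintegral_mono fun _ => by gcongr; exact h _

theorem lconvolution_const_mul {f g : G → ℝ≥0∞} {c : ℝ≥0∞} (hc : c ≠ ∞) :
    (f ⋆ₗ[μ] fun x => c * g x) = fun x => c * (f ⋆ₗ[μ] g) x := by
  ext x
  simp only [lconvolution_def, mul_left_comm (f _), lintegral_const_mul' _ _ hc]

end lconvolution

theorem ENNReal.mul_add_mul_le_mul_add_mul {a b c d : ℝ≥0∞} (hab : a ≤ b) (hcd : c ≤ d) :
    a * d + b * c ≤ a * c + b * d := by
  obtain ⟨e, rfl⟩ := exists_add_of_le hab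
  obtain ⟨f, rfl⟩ := exists_add_of_le hcd
  calc a * (c + f) + (a + e) * c = a * c + (a * c + a * f + e * c) := by ring
    _ ≤ a * c + (a * c + a * f + e * c + e * f) := add_le_add_right le_self_add _
    _ = a * c + (a + e) * (c + f) := by ring

theorem lintegral_Ioo_zero_add_Ico {f : ℝ → ℝ≥0∞} {a b : ℝ} (ha : 0 < a) (hab : a ≤ b) :
    ∫⁻ τ in Ioo 0 b, f τ = (∫⁻ τ in Ioo 0 a, f τ) + ∫⁻ τ in Ico a b, f τ := by
  rw [← Ioo_union_Ico_eq_Ioo ha hab, lintegral_union measurableSet_Ico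
    ((Iio_disjoint_Ici le_rfl).mono Ioo_subset_Iio_self Ico_subset_Ici_self)]

noncomputable def causalLift (f : ℝ → ℝ) : ℝ → ℝ≥0∞ :=
  (Ioi 0).indicator fun x => ENNReal.ofReal (f x)

section causalLift

variable {f g : ℝ → ℝ}

theorem causalLift_mono (h : ∀ x ∈ Ioi (0:ℝ), f x ≤ g x) : causalLift f ≤ causalLift g := by
  intro x
  by_cases hx : x ∈ Ioi (0:ℝ)
  · simpa [causalLift, hx] using ENNReal.ofReal_le_ofReal (h x hx)
  · simp [causalLift, hx]

theorem aemeasurable_causalLift (hf : AEStronglyMeasurable f (volume.restrict (Ioi 0))) :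
    AEMeasurable (causalLift f) :=
  (aemeasurable_indicator_iff measurableSet_Ioi).2 hf.aemeasurable.ennreal_ofReal

theorem causalLift_lconvolution_apply (t : ℝ) :
    (causalLift f ⋆ₗ causalLift g) t
      = ∫⁻ τ in Ioo 0 t, ENNReal.ofReal (f (t - τ)) * ENNReal.ofReal (g τ) := by
  rw [lconvolution_comm, lconvolution_def, ← lintegral_indicator measurableSet_Ioo]
  congr 1 with y
  by_cases hy : 0 < y <;> by_cases hty : y < t <;>
    simp [causalLift, hy, hty, sub_pos, neg_add_eq_sub, mul_comm]

theorem one_lconvolution_causalLift_apply (t : ℝ) :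
    (causalLift 1 ⋆ₗ causalLift f) t = ∫⁻ τ in Ioo 0 t, ENNReal.ofReal (f τ) := by
  simp [causalLift_lconvolution_apply]

theorem causalLift_lconvolution_apply_of_nonneg (hf₀ : ∀ x ∈ Ioi (0:ℝ), 0 ≤ f x)
    (t : ℝ) :
    (causalLift f ⋆ₗ causalLift g) t = ∫⁻ τ in Ioo 0 t, ENNReal.ofReal (f (t - τ) * g τ) := by
  rw [causalLift_lconvolution_apply]
  exact setLIntegral_congr_fun measurableSet_Ioo fun τ hτ =>
    (ENNReal.ofReal_mul (hf₀ _ (sub_pos.2 hτ.2))).symm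

theorem causalLift_lconvolution_one_mul_le (hg : AntitoneOn g (Ioi 0)) {t : ℝ} (ht : 0 < t) :
    (causalLift f ⋆ₗ causalLift 1) t * ENNReal.ofReal (g t) ≤ (causalLift f ⋆ₗ causalLift g) t := by
  rw [causalLift_lconvolution_apply, causalLift_lconvolution_apply,
    ← lintegral_mul_const' _ _ ENNReal.ofReal_ne_top]
  refine setLIntegral_mono' measurableSet_Ioo fun τ hτ => ?_
  rw [Pi.one_apply, ENNReal.ofReal_one, mul_one]
  gcongr
  exact hg hτ.1 ht hτ.2.le

theorem lintegral_Ioo_ne_top_of_lconvolution_eq_one (hf : AEMeasurable (causalLift f))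
    (hg : AEMeasurable (causalLift g)) (hfg : causalLift f ⋆ₗ causalLift g = causalLift 1)
    (u : ℝ) : ∫⁻ τ in Ioo 0 u, ENNReal.ofReal (f τ) ≠ ∞ := by
  have hg_pos : ∫⁻ y in Iio 1, causalLift g y ≠ 0 := by
    intro h0
    have h_lt : ∫⁻ y in Iio 1, causalLift g y * causalLift f (-y + 1) = 0 := by
      refine le_antisymm ?_ bot_le
      calc _ ≤ ∫⁻ y in Iio 1, causalLift g y * ∞ := lintegral_mono fun y => by gcongr; exact le_top
        _ = 0 := by rw [lintegral_mul_const'' _ hg.restrict, h0, zero_mul]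
    have h_ge : ∫⁻ y in (Iio 1)ᶜ, causalLift g y * causalLift f (-y + 1) = 0 := by
      refine (setLIntegral_congr_fun measurableSet_Iio.compl fun y hy => ?_).trans lintegral_zero
      simp_all [causalLift]
    have h1 := congrFun hfg 1
    rw [lconvolution_comm, lconvolution_def, ← lintegral_add_compl _ measurableSet_Iio, h_lt,
      h_ge] at h1
    simp [causalLift] at h1
  have hassoc : causalLift 1 ⋆ₗ causalLift 1 = causalLift g ⋆ₗ (causalLift 1 ⋆ₗ causalLift f) := by
    calc _ = causalLift 1 ⋆ₗ (causalLift f ⋆ₗ causalLift g) := by rw [hfg]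
      _ = _ := by
        rw [lconvolution_assoc₀ (aemeasurable_causalLift (f := 1) aestronglyMeasurable_const) hf hg,
          lconvolution_comm]
  intro hu
  have hHH : (causalLift 1 ⋆ₗ causalLift 1) (u + 1) ≠ ∞ := by
    simp [one_lconvolution_causalLift_apply]
  refine hHH (top_unique ?_)
  rw [hassoc, lconvolution_def]
  calc ∞ = (∫⁻ y in Iio 1, causalLift g y) * ∞ := (ENNReal.mul_top hg_pos).symm
    _ = ∫⁻ y in Iio 1, causalLift g y * (causalLift 1 ⋆ₗ causalLift f) (-y + (u + 1)) := by
      rw [← lintegral_mul_const'' _ hg.restrict]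
      refine setLIntegral_congr_fun measurableSet_Iio fun y hy => ?_
      have hmono : ∫⁻ τ in Ioo 0 u, ENNReal.ofReal (f τ)
          ≤ ∫⁻ τ in Ioo 0 (-y + (u + 1)), ENNReal.ofReal (f τ) :=
        lintegral_mono_set (Ioo_subset_Ioo_right (by linarith [mem_Iio.1 hy]))
      rw [hu] at hmono
      rw [one_lconvolution_causalLift_apply, top_unique hmono]
    _ ≤ _ := setLIntegral_le_lintegral _ _

end causalLift

section lconv

variable {f g : ℝ → ℝ}

theorem lconv_eq_setIntegral {t : ℝ} (ht : 0 ≤ t) :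
    lconv f g t = ∫ τ in Ioo 0 t, f (t - τ) * g τ := by
  rw [lconv, intervalIntegral.integral_of_le ht, integral_Ioc_eq_integral_Ioo]

theorem lconv_nonneg (hf₀ : ∀ x ∈ Ioi (0:ℝ), 0 ≤ f x) (hg₀ : ∀ x ∈ Ioi (0:ℝ), 0 ≤ g x) {t : ℝ}
    (ht : 0 ≤ t) : 0 ≤ lconv f g t := by
  rw [lconv_eq_setIntegral ht]
  exact setIntegral_nonneg measurableSet_Ioo fun τ hτ =>
    mul_nonneg (hf₀ _ (sub_pos.2 hτ.2)) (hg₀ _ hτ.1)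

theorem integrableOn_of_lconv_ne_zero {t : ℝ} (ht : 0 ≤ t) (h : lconv f g t ≠ 0) :
    IntegrableOn (fun τ => f (t - τ) * g τ) (Ioo 0 t) := by
  by_contra hint
  exact h (by rw [lconv_eq_setIntegral ht, integral_undef hint])

theorem integrableOn_of_lconvolution_ne_top (hf : AEStronglyMeasurable f (volume.restrict (Ioi 0)))
    (hg : AEStronglyMeasurable g (volume.restrict (Ioi 0))) (hf₀ : ∀ x ∈ Ioi (0:ℝ), 0 ≤ f x)
    (hg₀ : ∀ x ∈ Ioi (0:ℝ), 0 ≤ g x) {t : ℝ} (h : (causalLift f ⋆ₗ causalLift g) t ≠ ∞) :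
    IntegrableOn (fun τ => f (t - τ) * g τ) (Ioo 0 t) := by
  have hF := (aestronglyMeasurable_indicator_iff measurableSet_Ioi).2 hf
  have hG := (aestronglyMeasurable_indicator_iff measurableSet_Ioi).2 hg
  have hFt := hF.comp_quasiMeasurePreserving
    (Measure.measurePreserving_sub_left volume t).quasiMeasurePreserving
  refine ⟨(hFt.mul hG).restrict.congr ?_, ?_⟩
  · filter_upwards [ae_restrict_mem measurableSet_Ioo] with τ hτ
    simp [hτ.1, hτ.2]
  · rw [hasFiniteIntegral_iff_ofReal, ← causalLift_lconvolution_apply_of_nonneg hf₀]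
    · exact h.lt_top
    filter_upwards [ae_restrict_mem measurableSet_Ioo] with τ hτ
    exact mul_nonneg (hf₀ _ (sub_pos.2 hτ.2)) (hg₀ _ hτ.1)

theorem ofReal_lconv (hf₀ : ∀ x ∈ Ioi (0:ℝ), 0 ≤ f x) (hg₀ : ∀ x ∈ Ioi (0:ℝ), 0 ≤ g x) {t : ℝ}
    (ht : 0 ≤ t) (hint : IntegrableOn (fun τ => f (t - τ) * g τ) (Ioo 0 t)) :
    ENNReal.ofReal (lconv f g t) = (causalLift f ⋆ₗ causalLift g) t := by
  rw [lconv_eq_setIntegral ht, ofReal_integral_eq_lintegral_ofReal hint,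
    causalLift_lconvolution_apply_of_nonneg hf₀]
  filter_upwards [ae_restrict_mem measurableSet_Ioo] with τ hτ
  exact mul_nonneg (hf₀ _ (sub_pos.2 hτ.2)) (hg₀ _ hτ.1)

end lconv

namespace SoninePC

variable {k l : ℝ → ℝ}

theorem lconvolution_causalLift (hkl : SoninePC k l) :
    causalLift k ⋆ₗ causalLift l = causalLift 1 := by
  ext t
  rcases le_or_gt t 0 with ht | ht
  · rw [causalLift_lconvolution_apply]
    simp [causalLift, ht]
  have h1 := hkl.sonine t ht
  rw [← ofReal_lconv hkl.k_nonneg hkl.l_nonneg ht.le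
    (integrableOn_of_lconv_ne_zero ht.le (by simp [h1])), h1]
  simp [causalLift, ht]

theorem lintegral_k_ne_top (hkl : SoninePC k l) (u : ℝ) :
    ∫⁻ τ in Ioo 0 u, ENNReal.ofReal (k τ) ≠ ∞ :=
  lintegral_Ioo_ne_top_of_lconvolution_eq_one
    (aemeasurable_causalLift hkl.k_locInt.aestronglyMeasurable)
    (aemeasurable_causalLift hkl.l_locInt.aestronglyMeasurable) hkl.lconvolution_causalLift u

theorem lintegral_l_ne_top (hkl : SoninePC k l) (u : ℝ) :
    ∫⁻ τ in Ioo 0 u, ENNReal.ofReal (l τ) ≠ ∞ :=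
  lintegral_Ioo_ne_top_of_lconvolution_eq_one
    (aemeasurable_causalLift hkl.l_locInt.aestronglyMeasurable)
    (aemeasurable_causalLift hkl.k_locInt.aestronglyMeasurable)
    (lconvolution_comm.trans hkl.lconvolution_causalLift) u

theorem ofReal_integral_l (hkl : SoninePC k l) {t : ℝ} (ht : 0 ≤ t) :
    ENNReal.ofReal (∫ τ in (0:ℝ)..t, l τ) = (causalLift l ⋆ₗ causalLift 1) t := by
  have hfin : (causalLift 1 ⋆ₗ causalLift l) t ≠ ∞ := by
    simpa [one_lconvolution_causalLift_apply] using hkl.lintegral_l_ne_top t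
  have hint := integrableOn_of_lconvolution_ne_top (f := 1) aestronglyMeasurable_const
    hkl.l_locInt.aestronglyMeasurable (fun _ _ => zero_le_one) hkl.l_nonneg hfin
  rw [lconvolution_comm, ← ofReal_lconv (f := 1) (fun _ _ => zero_le_one) hkl.l_nonneg ht hint]
  simp [lconv]

end SoninePC

section Volterra

variable {k l s : ℝ → ℝ} {μ : ℝ}

theorem le_one_of_volterra (hl₀ : ∀ t ∈ Ioi (0:ℝ), 0 ≤ l t) (hs₀ : ∀ t ∈ Ioi (0:ℝ), 0 ≤ s t)
    (hμ : 0 ≤ μ) (hvolt : ∀ t ∈ Ioi (0:ℝ), s t + μ * lconv l s t = 1) {t : ℝ} (ht : t ∈ Ioi 0) :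
    s t ≤ 1 := by
  have := mul_nonneg hμ (lconv_nonneg hl₀ hs₀ (le_of_lt ht))
  linarith [hvolt t ht]

theorem causalLift_one_sub_eq_lconvolution (hkl : SoninePC k l) (hμ : 0 ≤ μ)
    (hs₀ : ∀ t ∈ Ioi (0:ℝ), 0 ≤ s t) (hs : Measurable s)
    (hvolt : ∀ t ∈ Ioi (0:ℝ), s t + μ * lconv l s t = 1) :
    causalLift (1 - s) = fun t => ENNReal.ofReal μ * (causalLift l ⋆ₗ causalLift s) t := by
  ext t
  rcases le_or_gt t 0 with ht | ht
  · rw [causalLift_lconvolution_apply]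
    simp [causalLift, ht]
  have hfin : (causalLift l ⋆ₗ causalLift s) t ≠ ∞ := by
    refine ne_top_of_le_ne_top ?_ (lconvolution_mono_right
      (causalLift_mono (g := 1) fun _ => le_one_of_volterra hkl.l_nonneg hs₀ hμ hvolt) t)
    rw [lconvolution_comm, one_lconvolution_causalLift_apply]
    exact hkl.lintegral_l_ne_top t
  have hint := integrableOn_of_lconvolution_ne_top hkl.l_locInt.aestronglyMeasurable
    hs.aestronglyMeasurable hkl.l_nonneg hs₀ hfin
  rw [← ofReal_lconv hkl.l_nonneg hs₀ ht.le hint, ← ENNReal.ofReal_mul hμ]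
  simp [causalLift, ht, ← hvolt t ht]

theorem lconvolution_causalLift_one_sub (hkl : SoninePC k l) (hμ : 0 ≤ μ)
    (hs₀ : ∀ t ∈ Ioi (0:ℝ), 0 ≤ s t) (hs : Measurable s)
    (hvolt : ∀ t ∈ Ioi (0:ℝ), s t + μ * lconv l s t = 1) :
    causalLift k ⋆ₗ causalLift (1 - s)
      = fun t => ENNReal.ofReal μ * (causalLift 1 ⋆ₗ causalLift s) t := by
  rw [causalLift_one_sub_eq_lconvolution hkl hμ hs₀ hs hvolt,
    lconvolution_const_mul ENNReal.ofReal_ne_top,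
    lconvolution_assoc₀ (aemeasurable_causalLift hkl.k_locInt.aestronglyMeasurable)
      (aemeasurable_causalLift hkl.l_locInt.aestronglyMeasurable)
      (aemeasurable_causalLift hs.aestronglyMeasurable),
    hkl.lconvolution_causalLift]

/-- Pointwise, this is the rearrangement inequality for the pairs `1 - s(y) ≤ 1 - s(a)`,
`k(b - y) ≤ k(a - y)` (for `y < a`) and their reverses (for `y ≥ a`, where `k(a - y)` is `0`). -/
theorem lconvolution_causalLift_one_sub_add_le (hk : AntitoneOn k (Ioi 0))
    (hK : AEMeasurable (causalLift k)) (hs : AntitoneOn s (Ioi 0)) (hsm : Measurable s) {a b : ℝ}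
    (ha : 0 < a) (hab : a ≤ b) :
    (causalLift (1 - s) ⋆ₗ causalLift k) a
        + ENNReal.ofReal (1 - s a) * (causalLift 1 ⋆ₗ causalLift k) b
      ≤ (causalLift (1 - s) ⋆ₗ causalLift k) b
        + ENNReal.ofReal (1 - s a) * (causalLift 1 ⋆ₗ causalLift k) a := by
  set D := causalLift (1 - s)
  set K := causalLift k
  set H := causalLift 1
  set c := ENNReal.ofReal (1 - s a)
  have hD : Measurable D :=
    (measurable_const.sub hsm).ennreal_ofReal.indicator measurableSet_Ioi
  have hpt (y : ℝ) : D y * K (-y + a) + c * (H y * K (-y + b))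
      ≤ D y * K (-y + b) + c * (H y * K (-y + a)) := by
    rcases le_or_gt y 0 with hy | hy
    · simp [D, H, causalLift, hy]
    have hHy : H y = 1 := by simp [H, causalLift, hy]
    have hDy : D y = ENNReal.ofReal (1 - s y) := by simp [D, causalLift, hy]
    rw [hHy, one_mul, one_mul, hDy]
    rcases lt_or_ge y a with hya | hay
    · have hya' : -y + a ∈ Ioi 0 := by simp only [mem_Ioi]; linarith
      have hyb' : -y + b ∈ Ioi 0 := by simp only [mem_Ioi]; linarith
      have hKab : K (-y + b) ≤ K (-y + a) := by
        simp only [K, causalLift, indicator_of_mem hya', indicator_of_mem hyb']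
        exact ENNReal.ofReal_le_ofReal (hk hya' hyb' (by linarith))
      have hdc : ENNReal.ofReal (1 - s y) ≤ c :=
        ENNReal.ofReal_le_ofReal (by linarith [hs hy ha hya.le])
      exact ENNReal.mul_add_mul_le_mul_add_mul hdc hKab
    · have hKa : K (-y + a) = 0 := by simp [K, causalLift, not_lt.2 hay]
      have hcd : c ≤ ENNReal.ofReal (1 - s y) :=
        ENNReal.ofReal_le_ofReal (by linarith [hs ha hy hay])
      rw [hKa, mul_zero, mul_zero, zero_add, add_zero]
      gcongr
  have hsplit (x x' : ℝ) : (D ⋆ₗ K) x + c * (H ⋆ₗ K) x'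
      = ∫⁻ y, D y * K (-y + x) + c * (H y * K (-y + x')) := by
    rw [lconvolution_def, lconvolution_def, ← lintegral_const_mul' _ _ ENNReal.ofReal_ne_top,
      lintegral_add_left' (by fun_prop)]
  rw [hsplit, hsplit]
  exact lintegral_mono hpt

theorem one_sub_mul_lintegral_Ico_le (hkl : SoninePC k l) (hμ : 0 ≤ μ)
    (hs₀ : ∀ t ∈ Ioi (0:ℝ), 0 ≤ s t) (hs : AntitoneOn s (Ioi 0)) (hsm : Measurable s)
    (hvolt : ∀ t ∈ Ioi (0:ℝ), s t + μ * lconv l s t = 1) {a b : ℝ} (ha : 0 < a) (hab : a ≤ b) :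
    ENNReal.ofReal (1 - s a) * ∫⁻ τ in Ico a b, ENNReal.ofReal (k τ)
      ≤ ENNReal.ofReal μ * ∫⁻ τ in Ico a b, ENNReal.ofReal (s τ) := by
  have h := lconvolution_causalLift_one_sub_add_le hkl.k_anti
    (aemeasurable_causalLift hkl.k_locInt.aestronglyMeasurable) hs hsm ha hab
  have hDK (x : ℝ) : (causalLift (1 - s) ⋆ₗ causalLift k) x
      = ENNReal.ofReal μ * ∫⁻ τ in Ioo 0 x, ENNReal.ofReal (s τ) := by
    rw [lconvolution_comm, lconvolution_causalLift_one_sub hkl hμ hs₀ hsm hvolt]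
    exact congrArg _ (one_lconvolution_causalLift_apply x)
  rw [hDK, hDK, one_lconvolution_causalLift_apply, one_lconvolution_causalLift_apply,
    lintegral_Ioo_zero_add_Ico ha hab,
    lintegral_Ioo_zero_add_Ico (f := fun τ => ENNReal.ofReal (s τ)) ha hab] at h
  set c := ENNReal.ofReal (1 - s a)
  set Sa := ∫⁻ τ in Ioo 0 a, ENNReal.ofReal (s τ)
  set Ka := ∫⁻ τ in Ioo 0 a, ENNReal.ofReal (k τ)
  have hSa : Sa ≠ ∞ := by
    refine ne_top_of_le_ne_top (measure_Ioo_lt_top (μ := volume) (a := 0) (b := a)).ne ?_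
    rw [← setLIntegral_one]
    exact setLIntegral_mono' measurableSet_Ioo fun τ hτ =>
      ENNReal.ofReal_le_one.2 (le_one_of_volterra hkl.l_nonneg hs₀ hμ hvolt hτ.1)
  have hKa : Ka ≠ ∞ := hkl.lintegral_k_ne_top a
  refine (ENNReal.add_le_add_iff_left (a := ENNReal.ofReal μ * Sa + c * Ka) (by finiteness)).1 ?_
  calc _ = ENNReal.ofReal μ * Sa + c * (Ka + ∫⁻ τ in Ico a b, ENNReal.ofReal (k τ)) := by ring
    _ ≤ _ := h
    _ = _ := by ring

theorem one_sub_mul_le_mul_of_lt (hkl : SoninePC k l) (hμ : 0 ≤ μ)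
    (hs₀ : ∀ t ∈ Ioi (0:ℝ), 0 ≤ s t) (hs : AntitoneOn s (Ioi 0)) (hsm : Measurable s)
    (hvolt : ∀ t ∈ Ioi (0:ℝ), s t + μ * lconv l s t = 1) {a b : ℝ} (ha : 0 < a) (hab : a < b) :
    (1 - s a) * k b ≤ μ * s a := by
  have hk : ENNReal.ofReal (k b) * ENNReal.ofReal (b - a)
      ≤ ∫⁻ τ in Ico a b, ENNReal.ofReal (k τ) := by
    rw [← Real.volume_Ico, ← setLIntegral_const]
    exact setLIntegral_mono' measurableSet_Ico fun τ hτ => ENNReal.ofReal_le_ofReal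
      (hkl.k_anti (ha.trans_le hτ.1) (ha.trans hab) hτ.2.le)
  have hs' : ∫⁻ τ in Ico a b, ENNReal.ofReal (s τ)
      ≤ ENNReal.ofReal (s a) * ENNReal.ofReal (b - a) := by
    rw [← Real.volume_Ico, ← setLIntegral_const]
    exact setLIntegral_mono' measurableSet_Ico fun τ hτ => ENNReal.ofReal_le_ofReal
      (hs ha (ha.trans_le hτ.1) hτ.1)
  have hsa := le_one_of_volterra hkl.l_nonneg hs₀ hμ hvolt ha
  have h : ENNReal.ofReal ((1 - s a) * k b * (b - a)) ≤ ENNReal.ofReal (μ * s a * (b - a)) := by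
    calc ENNReal.ofReal ((1 - s a) * k b * (b - a))
        = ENNReal.ofReal (1 - s a) * (ENNReal.ofReal (k b) * ENNReal.ofReal (b - a)) := by
          rw [ENNReal.ofReal_mul (by nlinarith [hkl.k_nonneg b (ha.trans hab)]),
            ENNReal.ofReal_mul (by linarith), mul_assoc]
      _ ≤ ENNReal.ofReal (1 - s a) * ∫⁻ τ in Ico a b, ENNReal.ofReal (k τ) := by gcongr
      _ ≤ ENNReal.ofReal μ * ∫⁻ τ in Ico a b, ENNReal.ofReal (s τ) :=
          one_sub_mul_lintegral_Ico_le hkl hμ hs₀ hs hsm hvolt ha hab.le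
      _ ≤ ENNReal.ofReal μ * (ENNReal.ofReal (s a) * ENNReal.ofReal (b - a)) := by gcongr
      _ = ENNReal.ofReal (μ * s a * (b - a)) := by
          rw [ENNReal.ofReal_mul (mul_nonneg hμ (hs₀ a ha)), ENNReal.ofReal_mul hμ, mul_assoc]
  rw [ENNReal.ofReal_le_ofReal_iff (mul_nonneg (mul_nonneg hμ (hs₀ a ha)) (sub_pos.2 hab).le)] at h
  exact le_of_mul_le_mul_right h (sub_pos.2 hab)

theorem ae_one_sub_mul_le_mul (hkl : SoninePC k l) (hμ : 0 ≤ μ)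
    (hs₀ : ∀ t ∈ Ioi (0:ℝ), 0 ≤ s t) (hs : AntitoneOn s (Ioi 0)) (hsm : Measurable s)
    (hvolt : ∀ t ∈ Ioi (0:ℝ), s t + μ * lconv l s t = 1) :
    ∀ᵐ t : ℝ, t ∈ Ioi (0:ℝ) → (1 - s t) * k t ≤ μ * s t := by
  filter_upwards [hkl.k_anti.countable_not_continuousWithinAt.ae_notMem volume] with t htC ht
  have hcont : ContinuousWithinAt k (Ioi t) t :=
    (not_not.1 fun h => htC ⟨ht, h⟩).mono (Ioi_subset_Ioi (le_of_lt ht))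
  exact le_of_tendsto (tendsto_const_nhds.mul hcont.tendsto)
    (eventually_nhdsWithin_of_forall fun b hb =>
      one_sub_mul_le_mul_of_lt hkl hμ hs₀ hs hsm hvolt ht hb)

theorem le_one_div_one_add_mul_integral (hkl : SoninePC k l) (hμ : 0 ≤ μ)
    (hs₀ : ∀ t ∈ Ioi (0:ℝ), 0 ≤ s t) (hs : AntitoneOn s (Ioi 0)) (hsm : Measurable s)
    (hvolt : ∀ t ∈ Ioi (0:ℝ), s t + μ * lconv l s t = 1) {t : ℝ} (ht : 0 < t) :
    s t ≤ 1 / (1 + μ * ∫ τ in (0:ℝ)..t, l τ) := by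
  have hI₀ : 0 ≤ ∫ τ in (0:ℝ)..t, l τ := by
    simpa [lconv] using lconv_nonneg (f := 1) (fun _ _ => zero_le_one) hkl.l_nonneg ht.le
  have hst := le_one_of_volterra hkl.l_nonneg hs₀ hμ hvolt ht
  have h : ENNReal.ofReal (μ * ((∫ τ in (0:ℝ)..t, l τ) * s t)) ≤ ENNReal.ofReal (1 - s t) := by
    have hD := congrFun (causalLift_one_sub_eq_lconvolution hkl hμ hs₀ hsm hvolt) t
    simp only [causalLift, indicator_of_mem (show t ∈ Ioi 0 from ht), Pi.sub_apply,
      Pi.one_apply] at hD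
    rw [hD, ENNReal.ofReal_mul hμ, ENNReal.ofReal_mul hI₀, hkl.ofReal_integral_l ht.le]
    gcongr
    exact causalLift_lconvolution_one_mul_le hs ht
  rw [ENNReal.ofReal_le_ofReal_iff (sub_nonneg.2 hst)] at h
  rw [le_div_iff₀ (add_pos_of_pos_of_nonneg one_pos (mul_nonneg hμ hI₀))]
  linarith

end Volterra

theorem stmt_0_general (k l : ℝ → ℝ) (hkl : SoninePC k l) (μ : ℝ) (hμ : 0 < μ)
    (s : ℝ → ℝ)
    (hs_nonneg : ∀ t ∈ Ioi (0:ℝ), 0 ≤ s t)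
    (hs_anti : AntitoneOn s (Ioi 0))
    (hs_meas : Measurable s)
    (hvolt : ∀ t ∈ Ioi (0:ℝ), s t + μ * lconv l s t = 1) :
    ∀ᵐ t : ℝ, t ∈ Ioi (0:ℝ) →
      k t / (k t + μ) ≤ s t ∧
      s t ≤ 1 / (1 + μ * ∫ τ in (0:ℝ)..t, l τ) ∧
      (0 < k t → 1 / (1 + μ * (k t)⁻¹) ≤ s t) := by
  filter_upwards [ae_one_sub_mul_le_mul hkl hμ.le hs_nonneg hs_anti hs_meas hvolt] with t hkey ht
  have hk := hkl.k_nonneg t ht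
  have hlower : k t / (k t + μ) ≤ s t := by
    rw [div_le_iff₀ (by positivity)]
    linarith [hkey ht]
  refine ⟨hlower, le_one_div_one_add_mul_integral hkl hμ.le hs_nonneg hs_anti hs_meas hvolt ht,
    fun hkt => ?_⟩
  rwa [show 1 / (1 + μ * (k t)⁻¹) = k t / (k t + μ) by field_simp]

theorem stmt_0 (k l : ℝ → ℝ) (hkl : SoninePC k l) (μ : ℝ) (hμ : 0 < μ)
    (s : ℝ → ℝ)
    (hs_nonneg : ∀ t ∈ Ioi (0:ℝ), 0 ≤ s t)
    (hs_anti : AntitoneOn s (Ioi 0))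
    (hs_meas : Measurable s)
    (hs_locInt : LocallyIntegrableOn s (Ioi 0))
    (hvolt : ∀ t ∈ Ioi (0:ℝ), s t + μ * lconv l s t = 1) :
    ∀ᵐ t : ℝ, t ∈ Ioi (0:ℝ) →
      k t / (k t + μ) ≤ s t ∧
      s t ≤ 1 / (1 + μ * ∫ τ in (0:ℝ)..t, l τ) ∧
      (0 < k t → 1 / (1 + μ * (k t)⁻¹) ≤ s t) :=
  stmt_0_general k l hkl μ hμ s hs_nonneg hs_anti hs_meas hvolt
end

section
/- Let 0 < α < β < 1 and set k(t) = g_{1−β+α}(t) + g_{1−β}(t) and l(t) = t^{β−1} E_{α,β}(−t^α) for t > 0. Then (k ∗ l)(t) = 1 for all t > 0; that is, (k,l) form a Sonine pair. -/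
/-!
Expanding the Mittag-Leffler function termwise gives `l = ∑ₙ (-1)ⁿ g_{αn+β}` on `(0, ∞)`, and the
Beta integral gives `g_μ ∗ g_ν = g_{μ+ν}`, so `k ∗ g_{αn+β} = g_{α(n+1)+1} + g_{αn+1}` and the
alternating series `∑ₙ (-1)ⁿ (g_{α(n+1)+1}(t) + g_{αn+1}(t))` telescopes to `g_1(t) = 1`.
Integrating termwise is legitimate because the integrals of the absolute values form the same
series without signs, which converges: `Γ(x) ≥ q^(x-2) / e^q` dominates it by a geometric series.
-/

open MeasureTheory Set

/-- `g μ t = t^(μ-1)/Γ(μ)`. -/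
noncomputable def g (μ t : ℝ) : ℝ := t ^ (μ - 1) / Real.Gamma μ

/-- Two-parameter Mittag-Leffler function `E_{α,β}(x) = ∑_{k=0}^∞ x^k/Γ(α k + β)`. -/
noncomputable def mittagLeffler (α β x : ℝ) : ℝ := ∑' k : ℕ, x ^ k / Real.Gamma (α * k + β)

open Filter

lemma intervalIntegrable_rpow_mul_sub_rpow {s u t : ℝ} (hs : 0 < s) (hu : 0 < u) (ht : 0 < t) :
    IntervalIntegrable (fun τ => τ ^ (s - 1) * (t - τ) ^ (u - 1)) volume 0 t := by
  have hmid : t / 2 ∈ Ioo 0 t := ⟨by linarith, by linarith⟩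
  refine IntervalIntegrable.trans (b := t / 2) ?_ ?_
  · refine (intervalIntegral.intervalIntegrable_rpow' (by linarith)).mul_continuousOn ?_
    refine ContinuousOn.rpow_const (by fun_prop) fun τ hτ => Or.inl ?_
    rw [uIcc_of_le hmid.1.le] at hτ
    linarith [hτ.2]
  · have h := (intervalIntegral.intervalIntegrable_rpow' (r := u - 1) (by linarith)
      (a := t / 2) (b := 0)).comp_sub_left t
    rw [sub_zero, sub_half] at h
    refine h.continuousOn_mul ?_
    refine ContinuousOn.rpow_const continuousOn_id fun τ hτ => Or.inl ?_
    rw [uIcc_of_le hmid.2.le] at hτ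
    exact (hmid.1.trans_le hτ.1).ne'

lemma integral_rpow_mul_sub_rpow {s u t : ℝ} (hs : 0 < s) (hu : 0 < u) (ht : 0 < t) :
    ∫ τ in 0..t, τ ^ (s - 1) * (t - τ) ^ (u - 1) =
      Real.Gamma s * Real.Gamma u / Real.Gamma (s + u) * t ^ (s + u - 1) := by
  have hcast : ((∫ τ in 0..t, τ ^ (s - 1) * (t - τ) ^ (u - 1) : ℝ) : ℂ) =
      ∫ τ in 0..t, (τ : ℂ) ^ ((s : ℂ) - 1) * ((t : ℂ) - τ) ^ ((u : ℂ) - 1) := by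
    rw [← intervalIntegral.integral_ofReal]
    refine intervalIntegral.integral_congr fun τ hτ => ?_
    rw [uIcc_of_le ht.le] at hτ
    simp only [Complex.ofReal_mul, Complex.ofReal_cpow hτ.1,
      Complex.ofReal_cpow (sub_nonneg.2 hτ.2)]
    push_cast
    rfl
  have hΓ : Complex.Gamma (s + u) ≠ 0 := by
    rw [← Complex.ofReal_add, Complex.Gamma_ofReal]
    exact_mod_cast (Real.Gamma_pos_of_pos (add_pos hs hu)).ne'
  have hbeta : Complex.betaIntegral s u =
      Complex.Gamma s * Complex.Gamma u / Complex.Gamma ((s + u : ℝ) : ℂ) := by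
    rw [Complex.ofReal_add, Complex.Gamma_mul_Gamma_eq_betaIntegral (by simpa) (by simpa),
      mul_div_cancel_left₀ _ hΓ]
  apply Complex.ofReal_injective
  rw [hcast, Complex.betaIntegral_scaled s u ht, hbeta, Complex.ofReal_mul,
    Complex.ofReal_cpow ht.le]
  simp only [Complex.Gamma_ofReal]
  push_cast
  ring

lemma rpow_sub_two_div_exp_le_Gamma {q x : ℝ} (hq : 1 ≤ q) (hx : 2 ≤ x) :
    q ^ (x - 2) / Real.exp q ≤ Real.Gamma x := by
  set j := ⌊x⌋₊ - 1
  have hj : (j : ℝ) + 1 = ⌊x⌋₊ := by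
    have : 1 ≤ ⌊x⌋₊ := Nat.le_floor (by norm_num; linarith)
    simp [j, Nat.cast_sub this]
  have hj_le : (j : ℝ) + 1 ≤ x := hj ▸ Nat.floor_le (by linarith)
  have hj_gt : x - 2 < j := by linarith [Nat.lt_floor_add_one x]
  have h2j : (2 : ℝ) ≤ j + 1 := hj ▸ by exact_mod_cast Nat.le_floor (by exact_mod_cast hx)
  calc q ^ (x - 2) / Real.exp q ≤ q ^ j / Real.exp q := by
        rw [← Real.rpow_natCast]
        gcongr
    _ ≤ j.factorial := by
        rw [div_le_iff₀ (Real.exp_pos q), ← div_le_iff₀' (by positivity)]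
        exact Real.pow_div_factorial_le_exp q (by linarith) j
    _ = Real.Gamma (j + 1) := (Real.Gamma_nat_eq_factorial j).symm
    _ ≤ Real.Gamma x := Real.Gamma_strictMonoOn_Ici.monotoneOn h2j (h2j.trans hj_le) hj_le

lemma summable_pow_div_Gamma_mul_add {a : ℝ} (ha : 0 < a) (c y : ℝ) :
    Summable fun n : ℕ => y ^ n / Real.Gamma (a * n + c) := by
  have hy : 0 < 2 * |y| + 1 := by positivity
  set q := (2 * |y| + 1) ^ a⁻¹
  have hq : 1 ≤ q := Real.one_le_rpow (by linarith [abs_nonneg y]) (by positivity)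
  have hq_pow (n : ℕ) : q ^ (a * n) = (2 * |y| + 1) ^ n := by
    rw [Real.rpow_mul (by positivity), ← Real.rpow_mul hy.le, inv_mul_cancel₀ ha.ne',
      Real.rpow_one, Real.rpow_natCast]
  set r := |y| / (2 * |y| + 1)
  have hr : r < 1 := (div_lt_one hy).2 (by linarith [abs_nonneg y])
  have hgrowth : Tendsto (fun n : ℕ => a * n + c) atTop atTop :=
    tendsto_atTop_add_const_right _ c (tendsto_natCast_atTop_atTop.const_mul_atTop ha)
  refine ((summable_geometric_of_lt_one (by positivity) hr).mul_left
    (Real.exp q / q ^ (c - 2))).of_norm_bounded_eventually_nat ?_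
  filter_upwards [hgrowth.eventually_ge_atTop 2] with n hn
  have hG := rpow_sub_two_div_exp_le_Gamma hq hn
  have hpos : 0 < q ^ (a * n + c - 2) / Real.exp q := by positivity
  calc ‖y ^ n / Real.Gamma (a * n + c)‖ = |y| ^ n / Real.Gamma (a * n + c) := by
        rw [norm_div, norm_pow, Real.norm_eq_abs, Real.norm_of_nonneg (hpos.trans_le hG).le]
    _ ≤ |y| ^ n / (q ^ (a * n + c - 2) / Real.exp q) := by gcongr
    _ = Real.exp q / q ^ (c - 2) * r ^ n := by
        rw [add_sub_assoc, Real.rpow_add (by positivity), hq_pow, div_pow]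
        field_simp

lemma g_nonneg {μ t : ℝ} (hμ : 0 ≤ μ) (ht : 0 ≤ t) : 0 ≤ g μ t :=
  div_nonneg (Real.rpow_nonneg ht _) (Real.Gamma_nonneg_of_nonneg hμ)

lemma g_one (t : ℝ) : g 1 t = 1 := by
  simp [g]

lemma g_mul_add_eq {a t : ℝ} (ht : 0 < t) (d : ℝ) (n : ℕ) :
    g (a * n + d) t = t ^ (d - 1) * ((t ^ a) ^ n / Real.Gamma (a * n + d)) := by
  rw [g, ← Real.rpow_natCast, ← Real.rpow_mul ht.le, add_sub_assoc, add_comm,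
    Real.rpow_add ht, mul_div_assoc]

lemma summable_g_mul_add {a : ℝ} (ha : 0 < a) (d : ℝ) {t : ℝ} (ht : 0 < t) :
    Summable fun n : ℕ => g (a * n + d) t := by
  simpa only [g_mul_add_eq ht] using (summable_pow_div_Gamma_mul_add ha d (t ^ a)).mul_left _

lemma intervalIntegrable_g_sub_mul_g {μ ν t : ℝ} (hμ : 0 < μ) (hν : 0 < ν) (ht : 0 < t) :
    IntervalIntegrable (fun τ => g μ (t - τ) * g ν τ) volume 0 t := by
  refine ((intervalIntegrable_rpow_mul_sub_rpow hν hμ ht).div_const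
    (Real.Gamma μ * Real.Gamma ν)).congr fun τ _ => ?_
  simp only [g]
  ring

lemma lconv_g_g {μ ν t : ℝ} (hμ : 0 < μ) (hν : 0 < ν) (ht : 0 < t) :
    lconv (g μ) (g ν) t = g (μ + ν) t := by
  have hΓμ := (Real.Gamma_pos_of_pos hμ).ne'
  have hΓν := (Real.Gamma_pos_of_pos hν).ne'
  calc lconv (g μ) (g ν) t
      = (∫ τ in 0..t, τ ^ (ν - 1) * (t - τ) ^ (μ - 1)) / (Real.Gamma μ * Real.Gamma ν) := by
        rw [lconv, ← intervalIntegral.integral_div]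
        refine intervalIntegral.integral_congr fun τ _ => ?_
        simp only [g]
        ring
    _ = g (μ + ν) t := by
        rw [integral_rpow_mul_sub_rpow hν hμ ht, g, add_comm ν]
        field_simp

lemma lconv_congr_right {k l l' : ℝ → ℝ} {t : ℝ} (ht : 0 ≤ t) (h : EqOn l l' (Ioc 0 t)) :
    lconv k l t = lconv k l' t := by
  simp only [lconv, intervalIntegral.integral_of_le ht]
  exact setIntegral_congr_fun measurableSet_Ioc fun τ hτ => by rw [h hτ]

lemma lconv_add_left {k₁ k₂ l : ℝ → ℝ} {t : ℝ}
    (h₁ : IntervalIntegrable (fun τ => k₁ (t - τ) * l τ) volume 0 t)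
    (h₂ : IntervalIntegrable (fun τ => k₂ (t - τ) * l τ) volume 0 t) :
    lconv (fun s => k₁ s + k₂ s) l t = lconv k₁ l t + lconv k₂ l t := by
  simp only [lconv, add_mul]
  exact intervalIntegral.integral_add h₁ h₂

lemma lconv_const_mul_right (k l : ℝ → ℝ) (c t : ℝ) :
    lconv k (fun τ => c * l τ) t = c * lconv k l t := by
  simp only [lconv, mul_left_comm _ c]
  exact intervalIntegral.integral_const_mul c _

lemma lconv_tsum {k : ℝ → ℝ} {f : ℕ → ℝ → ℝ} {t : ℝ} (ht : 0 ≤ t)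
    (hint : ∀ n, IntervalIntegrable (fun τ => k (t - τ) * f n τ) volume 0 t)
    (hsum : Summable fun n => ∫ τ in 0..t, ‖k (t - τ) * f n τ‖) :
    lconv k (fun τ => ∑' n, f n τ) t = ∑' n, lconv k (f n) t := by
  simp only [lconv, intervalIntegral.integral_of_le ht, ← tsum_mul_left] at hsum ⊢
  exact (integral_tsum_of_summable_integral_norm (fun n => (hint n).1) hsum).symm

lemma rpow_mul_mittagLeffler_neg_rpow (α β : ℝ) {t : ℝ} (ht : 0 < t) :
    t ^ (β - 1) * mittagLeffler α β (-(t ^ α)) = ∑' n : ℕ, (-1) ^ n * g (α * n + β) t := by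
  rw [mittagLeffler, ← tsum_mul_left]
  refine tsum_congr fun n => ?_
  rw [g_mul_add_eq ht, neg_pow]
  ring

theorem Summable.tsum_sub_add_one {G : Type*} [AddCommGroup G] [TopologicalSpace G]
    [IsTopologicalAddGroup G] [T2Space G] {f : ℕ → G} (hf : Summable f) :
    ∑' n, (f n - f (n + 1)) = f 0 := by
  rw [hf.tsum_sub ((summable_nat_add_iff 1).2 hf), hf.tsum_eq_zero_add, add_sub_cancel_right]

lemma lconv_g_add_g_tsum {μ ν a b t : ℝ} (hμ : 0 < μ) (hν : 0 < ν) (ha : 0 < a) (hb : 0 < b)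
    (ht : 0 < t) :
    lconv (fun s => g μ s + g ν s) (fun τ => ∑' n : ℕ, (-1) ^ n * g (a * n + b) τ) t =
      ∑' n : ℕ, (-1) ^ n * (g (μ + (a * n + b)) t + g (ν + (a * n + b)) t) := by
  have hρ (n : ℕ) : 0 < a * n + b := by positivity
  have hint (n : ℕ) : IntervalIntegrable
      (fun τ => (g μ (t - τ) + g ν (t - τ)) * g (a * n + b) τ) volume 0 t := by
    simpa only [add_mul] using (intervalIntegrable_g_sub_mul_g hμ (hρ n) ht).add
      (intervalIntegrable_g_sub_mul_g hν (hρ n) ht)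
  have hkg (n : ℕ) : lconv (fun s => g μ s + g ν s) (g (a * n + b)) t =
      g (μ + (a * n + b)) t + g (ν + (a * n + b)) t := by
    rw [lconv_add_left (intervalIntegrable_g_sub_mul_g hμ (hρ n) ht)
      (intervalIntegrable_g_sub_mul_g hν (hρ n) ht), lconv_g_g hμ (hρ n) ht, lconv_g_g hν (hρ n) ht]
  have hnorm (n : ℕ) : ∫ τ in 0..t, ‖(g μ (t - τ) + g ν (t - τ)) * ((-1) ^ n * g (a * n + b) τ)‖ =
      g (μ + (a * n + b)) t + g (ν + (a * n + b)) t := by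
    rw [← hkg n, lconv]
    refine intervalIntegral.integral_congr fun τ hτ => ?_
    rw [uIcc_of_le ht.le] at hτ
    have hτt : 0 ≤ t - τ := sub_nonneg.2 hτ.2
    rw [norm_mul, norm_mul, norm_pow, norm_neg, norm_one, one_pow, one_mul,
      Real.norm_of_nonneg (add_nonneg (g_nonneg hμ.le hτt) (g_nonneg hν.le hτt)),
      Real.norm_of_nonneg (g_nonneg (hρ n).le hτ.1)]
  rw [lconv_tsum ht.le (fun n => by simpa only [mul_left_comm] using (hint n).const_mul ((-1) ^ n))]
  · simp only [lconv_const_mul_right, hkg]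
  · simp only [hnorm]
    refine ((summable_g_mul_add ha (μ + b) ht).add (summable_g_mul_add ha (ν + b) ht)).congr
      fun n => ?_
    ring_nf

theorem stmt_7 (α β : ℝ) (hα : 0 < α) (hαβ : α < β) (hβ : β < 1)
    (k l : ℝ → ℝ)
    (hk : ∀ t : ℝ, k t = g (1 - β + α) t + g (1 - β) t)
    (hl : ∀ t : ℝ, l t = t ^ (β - 1) * mittagLeffler α β (-(t ^ α))) :
    ∀ t ∈ Ioi (0:ℝ), lconv k l t = 1 := by
  intro t ht
  obtain rfl : k = fun s => g (1 - β + α) s + g (1 - β) s := funext hk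
  set b : ℕ → ℝ := fun n => (-1) ^ n * g (α * n + 1) t
  have hb : Summable b := by
    refine .of_norm ((summable_g_mul_add hα 1 ht).congr fun n => ?_)
    simp [b, Real.norm_of_nonneg (g_nonneg (by positivity : (0:ℝ) ≤ α * n + 1) ht.le)]
  calc lconv _ l t = lconv _ (fun τ => ∑' n : ℕ, (-1) ^ n * g (α * n + β) τ) t :=
        lconv_congr_right ht.le fun τ hτ => by rw [hl, rpow_mul_mittagLeffler_neg_rpow α β hτ.1]
    _ = ∑' n : ℕ, (b n - b (n + 1)) := by
        rw [lconv_g_add_g_tsum (by linarith) (by linarith) hα (hα.trans hαβ) ht]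
        refine tsum_congr fun n => ?_
        rw [show 1 - β + α + (α * n + β) = α * ↑(n + 1) + 1 by push_cast; ring,
          show 1 - β + (α * n + β) = α * n + 1 by ring]
        simp only [b]
        ring
    _ = 1 := by rw [hb.tsum_sub_add_one]; simp [b, g_one]
end

section
/- Let k(t) = ∫_0^1 t^{α−1}/Γ(α) dα for t > 0 (the distributed-order kernel). Then for every s > 0 with s ≠ 1, the Laplace transform ∫_0^∞ e^{−s t} k(t) dt is finite and equals (1 − s^{−1})/log s = (s−1)/(s·log s); for s = 1 it equals 1. -/
open MeasureTheory Set

/-- The distributed-order kernel `k(t) = ∫_0^1 t^(α-1)/Γ(α) dα`. -/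
noncomputable def distKernel (t : ℝ) : ℝ := ∫ α in (0:ℝ)..1, t ^ (α - 1) / Real.Gamma α

section Aux
open Real

lemma aux_int {a r : ℝ} (ha : 0 < a) (hr : 0 < r) :
    IntegrableOn (fun t : ℝ => t ^ (a - 1) * Real.exp (-(r * t))) (Ioi 0) := by
  have h0 := Real.GammaIntegral_convergent ha
  have h2 : IntegrableOn (fun x : ℝ => Real.exp (-(r * x)) * (r * x) ^ (a - 1)) (Ioi 0) := by
    have := (integrableOn_Ioi_comp_mul_left_iff (fun x : ℝ => Real.exp (-x) * x ^ (a - 1)) 0 hr).mpr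
    simpa using this (by simpa using h0)
  have h3 : IntegrableOn (fun x : ℝ =>
      ((r : ℝ) ^ (a - 1))⁻¹ * (Real.exp (-(r * x)) * (r * x) ^ (a - 1))) (Ioi 0) :=
    h2.const_mul _
  apply IntegrableOn.congr_fun h3 ?_ measurableSet_Ioi
  intro x hx
  simp only []
  rw [Real.mul_rpow hr.le (le_of_lt hx)]
  have : (r : ℝ) ^ (a - 1) ≠ 0 := (Real.rpow_pos_of_pos hr _).ne'
  field_simp

lemma aux_val {a r : ℝ} (ha : 0 < a) (hr : 0 < r) :
    ∫ t in Ioi (0:ℝ), Real.exp (-(r * t)) * (t ^ (a - 1) / Real.Gamma a) = r ^ (-a) := by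
  have h1 : ∀ t ∈ Ioi (0:ℝ), Real.exp (-(r * t)) * (t ^ (a - 1) / Real.Gamma a)
      = (t ^ (a - 1) * Real.exp (-(r * t))) / Real.Gamma a := by
    intro t _; ring
  rw [setIntegral_congr_fun measurableSet_Ioi h1, integral_div,
    Real.integral_rpow_mul_exp_neg_mul_Ioi ha hr]
  rw [mul_div_assoc, div_self (Real.Gamma_pos_of_pos ha).ne', mul_one, one_div,
    Real.inv_rpow hr.le, ← Real.rpow_neg hr.le]

lemma main_core {s : ℝ} (hs : 0 < s) :
    IntegrableOn (fun t : ℝ => Real.exp (-(s * t)) * distKernel t) (Ioi 0) ∧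
    (∫ t in Ioi (0:ℝ), Real.exp (-(s * t)) * distKernel t) = ∫ α in Ioc (0:ℝ) 1, s ^ (-α) := by
  set f : ℝ → ℝ → ℝ := fun t α => Real.exp (-(s * t)) * (t ^ (α - 1) / Real.Gamma α) with hf
  set μ := volume.restrict (Ioi (0:ℝ))
  set ν := volume.restrict (Ioc (0:ℝ) 1)
  -- measurability
  have hmeas : AEStronglyMeasurable (Function.uncurry f) (μ.prod ν) := by
    have hrw : μ.prod ν = (volume : Measure (ℝ × ℝ)).restrict ((Ioi 0) ×ˢ (Ioc 0 1)) := by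
      rw [Measure.volume_eq_prod, Measure.prod_restrict]
    rw [hrw]
    apply ContinuousOn.aestronglyMeasurable ?_ (measurableSet_Ioi.prod measurableSet_Ioc)
    intro p hp
    apply ContinuousAt.continuousWithinAt
    have h1 : ContinuousAt (fun p : ℝ × ℝ => Real.exp (-(s * p.1))) p := by fun_prop
    have h2 : ContinuousAt (fun p : ℝ × ℝ => p.1 ^ (p.2 - 1)) p := by
      have h := Real.continuousAt_rpow (p.1, p.2 - 1) (Or.inl hp.1.ne')
      have hc : ContinuousAt (fun q : ℝ × ℝ => (q.1, q.2 - 1)) p := by fun_prop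
      exact ContinuousAt.comp (g := fun q : ℝ × ℝ => q.1 ^ q.2)
        (f := fun q : ℝ × ℝ => (q.1, q.2 - 1)) h hc
    have h3 : ContinuousAt (fun p : ℝ × ℝ => Real.Gamma p.2) p := by
      have hg : ContinuousAt Real.Gamma p.2 := by
        refine (Real.differentiableAt_Gamma ?_).continuousAt
        intro m hEq
        have h0 : (0:ℝ) < p.2 := hp.2.1
        rw [hEq] at h0
        have : (0:ℝ) ≤ (m:ℝ) := Nat.cast_nonneg m
        linarith
      exact hg.comp continuousAt_snd
    exact h1.mul (h2.div h3 (Real.Gamma_pos_of_pos hp.2.1).ne')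
  -- integrability on product
  have key : ∀ α ∈ Ioc (0:ℝ) 1, (∫ t, f t α ∂μ) = s ^ (-α) := fun α hα => aux_val hα.1 hs
  have hInt1 : ∀ α ∈ Ioc (0:ℝ) 1, Integrable (fun t => f t α) μ := by
    intro α hα
    have := (aux_int hα.1 hs).div_const (Real.Gamma α)
    apply IntegrableOn.congr_fun this ?_ measurableSet_Ioi
    intro t _; simp only [hf]; ring
  have hprod : Integrable (Function.uncurry f) (μ.prod ν) := by
    rw [integrable_prod_iff' hmeas]
    constructor
    · filter_upwards [ae_restrict_mem measurableSet_Ioc] with α hα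
      exact hInt1 α hα
    · have hcont : Integrable (fun α : ℝ => s ^ (-α)) ν := by
        apply Continuous.integrableOn_Ioc
        have : (fun α : ℝ => s ^ (-α)) = fun α => Real.exp (Real.log s * (-α)) := by
          funext α; rw [Real.rpow_def_of_pos hs]
        rw [this]; fun_prop
      apply hcont.congr
      filter_upwards [ae_restrict_mem measurableSet_Ioc] with α hα
      rw [← key α hα]
      have : ∀ t ∈ Ioi (0:ℝ), ‖f t α‖ = f t α := by
        intro t ht
        apply Real.norm_of_nonneg
        have : (0:ℝ) < t ^ (α - 1) := Real.rpow_pos_of_pos ht _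
        have := Real.Gamma_pos_of_pos hα.1
        positivity
      exact (setIntegral_congr_fun measurableSet_Ioi this).symm
  -- conclude
  have hker : ∀ t : ℝ, (∫ α, f t α ∂ν) = Real.exp (-(s * t)) * distKernel t := by
    intro t
    rw [distKernel, intervalIntegral.integral_of_le zero_le_one]
    exact integral_const_mul _ _
  constructor
  · have := hprod.integral_prod_left
    apply this.congr
    filter_upwards with t
    exact hker t
  · calc (∫ t in Ioi (0:ℝ), Real.exp (-(s * t)) * distKernel t)
        = ∫ t, ∫ α, f t α ∂ν ∂μ := by
          refine (setIntegral_congr_fun measurableSet_Ioi fun t _ => ?_).symm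
          exact hker t
      _ = ∫ α, ∫ t, f t α ∂μ ∂ν := integral_integral_swap hprod
      _ = ∫ α in Ioc (0:ℝ) 1, s ^ (-α) := setIntegral_congr_fun measurableSet_Ioc key

lemma eval_integral {s : ℝ} (hs : 0 < s) (hs1 : s ≠ 1) :
    ∫ α in Ioc (0:ℝ) 1, s ^ (-α) = (1 - s⁻¹) / Real.log s := by
  have hlog : Real.log s ≠ 0 := Real.log_ne_zero_of_pos_of_ne_one hs hs1
  have h1 : ∫ α in Ioc (0:ℝ) 1, s ^ (-α) = ∫ α in (0:ℝ)..1, Real.exp (-Real.log s * α) := by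
    rw [intervalIntegral.integral_of_le zero_le_one]
    refine setIntegral_congr_fun measurableSet_Ioc fun α _ => ?_
    rw [Real.rpow_def_of_pos hs]; ring_nf
  rw [h1, intervalIntegral.integral_comp_mul_left (fun x => Real.exp x) (neg_ne_zero.mpr hlog),
    integral_exp]
  rw [mul_zero, mul_one, Real.exp_zero, smul_eq_mul, Real.exp_neg, Real.exp_log hs]
  field_simp
  ring

end Aux

theorem stmt_10 :
    (∀ s : ℝ, 0 < s → s ≠ 1 →
      IntegrableOn (fun t : ℝ => Real.exp (-(s * t)) * distKernel t) (Ioi 0) ∧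
      (∫ t in Ioi (0:ℝ), Real.exp (-(s * t)) * distKernel t) = (1 - s⁻¹) / Real.log s ∧
      (1 - s⁻¹) / Real.log s = (s - 1) / (s * Real.log s)) ∧
    (IntegrableOn (fun t : ℝ => Real.exp (-(1 * t)) * distKernel t) (Ioi 0) ∧
      (∫ t in Ioi (0:ℝ), Real.exp (-(1 * t)) * distKernel t) = 1) := by
  constructor
  · intro s hs hs1
    obtain ⟨hInt, hVal⟩ := main_core hs
    refine ⟨hInt, ?_, ?_⟩
    · rw [hVal, eval_integral hs hs1]
    · have hlog : Real.log s ≠ 0 := Real.log_ne_zero_of_pos_of_ne_one hs hs1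
      field_simp
  · obtain ⟨hInt, hVal⟩ := main_core (one_pos : (0:ℝ) < 1)
    refine ⟨hInt, ?_⟩
    rw [hVal]
    simp [Real.one_rpow]
end

section
/- Let (k,l) belong to the class PC and let μ > 0. Let s_μ : (0,∞) → ℝ be a nonnegative, nonincreasing, measurable, locally integrable function satisfying s_μ(t) + μ·(l ∗ s_μ)(t) = 1 for all t > 0. If ∫_0^∞ l(τ) dτ = ∞ (i.e., (1 ∗ l)(t) → ∞ as t → ∞), then s_μ(t) → 0 as t → ∞. -/
open MeasureTheory Set Filter

theorem stmt_15 (k l : ℝ → ℝ) (hkl : SoninePC k l) (μ : ℝ) (hμ : 0 < μ)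
    (s : ℝ → ℝ)
    (hs_nonneg : ∀ t ∈ Ioi (0:ℝ), 0 ≤ s t)
    (hs_anti : AntitoneOn s (Ioi 0))
    (hs_meas : Measurable s)
    (hs_locInt : LocallyIntegrableOn s (Ioi 0))
    (hvolt : ∀ t ∈ Ioi (0:ℝ), s t + μ * lconv l s t = 1)
    (hl_div : Tendsto (fun t : ℝ => ∫ τ in (0:ℝ)..t, l τ) atTop atTop) :
    Tendsto s atTop (nhds 0) := by
  -- convolution values are nonnegative
  have hconv_nonneg : ∀ t ∈ Ioi (0:ℝ), 0 ≤ lconv l s t := by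
    intro t ht
    simp only [mem_Ioi] at ht
    unfold lconv
    rw [intervalIntegral.integral_of_le ht.le,
      ← setIntegral_congr_set (Ioo_ae_eq_Ioc (a := (0:ℝ)) (b := t))]
    apply setIntegral_nonneg measurableSet_Ioo
    intro τ hτ
    have h1 : 0 ≤ l (t - τ) := hkl.l_nonneg _ (by simp [mem_Ioi]; linarith [hτ.1, hτ.2])
    exact mul_nonneg h1 (hs_nonneg τ hτ.1)
  have hs_le_one : ∀ t ∈ Ioi (0:ℝ), s t ≤ 1 := by
    intro t ht
    have h := hvolt t ht
    nlinarith [hconv_nonneg t ht]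
  rw [tendsto_order]
  constructor
  · intro a ha
    filter_upwards [eventually_gt_atTop (0:ℝ)] with t ht
    exact lt_of_lt_of_le ha (hs_nonneg t ht)
  · intro ε hε
    suffices h : ∃ t₁ > (0:ℝ), s t₁ < ε by
      obtain ⟨t₁, ht₁, hst₁⟩ := h
      filter_upwards [eventually_ge_atTop t₁] with t ht
      exact lt_of_le_of_lt (hs_anti ht₁ (lt_of_lt_of_le ht₁ ht) ht) hst₁
    by_contra hc
    push_neg at hc
    -- so ε ≤ s t for all t > 0
    -- find T with l interval integrable on [0, T]
    obtain ⟨T, hT1, hT2⟩ :=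
      ((hl_div.eventually_ge_atTop 1).and (eventually_ge_atTop (1:ℝ))).exists
    have hT0 : (0:ℝ) < T := lt_of_lt_of_le one_pos hT2
    have hlT : IntervalIntegrable l volume 0 T := by
      by_contra h
      rw [intervalIntegral.integral_undef h] at hT1; linarith
    -- pick t with big integral
    obtain ⟨t, hbig, htT⟩ :=
      ((hl_div.eventually_gt_atTop (1 / (μ * ε))).and (eventually_ge_atTop T)).exists
    have ht0 : (0:ℝ) < t := lt_of_lt_of_le hT0 htT
    have hlt : IntervalIntegrable l volume 0 t := by
      refine hlT.trans ?_
      have : IntegrableOn l (Icc T t) volume :=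
        hkl.l_locInt.integrableOn_compact_subset
          (fun x hx => lt_of_lt_of_le hT0 hx.1) isCompact_Icc
      exact (this.mono_set (by rw [uIcc_of_le htT])).intervalIntegrable
    -- reversed function integrable on Ioo 0 t
    have hlrev : IntegrableOn (fun τ => l (t - τ)) (Ioo 0 t) volume := by
      have h1 : IntervalIntegrable (fun τ => l (t - τ)) volume (t - 0) (t - t) :=
        hlt.comp_sub_left t
      simp only [sub_zero, sub_self] at h1
      have := h1.symm.1
      exact this.mono_set Ioo_subset_Ioc_self
    have hεlrev : IntegrableOn (fun τ => ε * l (t - τ)) (Ioo 0 t) volume :=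
      hlrev.const_mul ε
    -- product integrable on Ioo 0 t
    have hprod : IntegrableOn (fun τ => l (t - τ) * s τ) (Ioo 0 t) volume := by
      refine Integrable.mono' hlrev
        (hlrev.aestronglyMeasurable.mul (hs_meas.aestronglyMeasurable.restrict)) ?_
      refine (ae_restrict_iff' measurableSet_Ioo).2 (ae_of_all _ fun τ hτ => ?_)
      have hl1 : 0 ≤ l (t - τ) := hkl.l_nonneg _ (by simp [mem_Ioi]; linarith [hτ.1, hτ.2])
      have hs1 : 0 ≤ s τ := hs_nonneg τ hτ.1
      have hs2 : s τ ≤ 1 := hs_le_one τ hτ.1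
      rw [Real.norm_eq_abs, abs_of_nonneg (mul_nonneg hl1 hs1)]
      nlinarith
    -- comparison
    have hmono : ∫ τ in Ioo (0:ℝ) t, ε * l (t - τ) ≤ ∫ τ in Ioo (0:ℝ) t, l (t - τ) * s τ := by
      refine setIntegral_mono_on hεlrev hprod measurableSet_Ioo fun τ hτ => ?_
      have hl1 : 0 ≤ l (t - τ) := hkl.l_nonneg _ (by simp [mem_Ioi]; linarith [hτ.1, hτ.2])
      have hsε : ε ≤ s τ := hc τ hτ.1
      nlinarith
    -- compute the left side
    have hleft : ∫ τ in Ioo (0:ℝ) t, ε * l (t - τ) = ε * ∫ τ in (0:ℝ)..t, l τ := by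
      rw [integral_const_mul, setIntegral_congr_set (Ioo_ae_eq_Ioc (a := (0:ℝ)) (b := t)),
        ← intervalIntegral.integral_of_le ht0.le,
        intervalIntegral.integral_comp_sub_left l t]
      simp
    -- the right side is lconv l s t
    have hright : ∫ τ in Ioo (0:ℝ) t, l (t - τ) * s τ = lconv l s t := by
      rw [setIntegral_congr_set (Ioo_ae_eq_Ioc (a := (0:ℝ)) (b := t))]
      unfold lconv
      rw [intervalIntegral.integral_of_le ht0.le]
    have hconv_le : lconv l s t ≤ 1 / μ := by
      have h := hvolt t ht0
      have h2 := hs_nonneg t ht0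
      rw [le_div_iff₀ hμ]
      nlinarith
    rw [hleft, hright] at hmono
    have : 1 / (μ * ε) < 1 / (μ * ε) := by
      calc 1 / (μ * ε) < ∫ τ in (0:ℝ)..t, l τ := hbig
        _ ≤ lconv l s t / ε := by rw [le_div_iff₀ hε]; linarith [hmono]
        _ ≤ (1 / μ) / ε := by gcongr
        _ = 1 / (μ * ε) := by field_simp
    exact lt_irrefl _ this
end
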